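/- The entropy of the law GW_{μ,d} of a Galton-Watson tree with Poisson(μ) offspring distribution truncated at depth d satisfies the recursion Ent(GW_{μ,d}) = Ent(GW_{μ,d−1}) + μ^{d−1}·Ent(π_μ), where Ent(π_μ) is the entropy of the Poisson(μ) distribution. Consequently, if μ < 1 then Ent(GW_{μ,d}) ≤ Ent(π_μ)/(1−μ) for all d. -/

import Mathlib

/-- Rooted trees given by the list of subtrees of the root. -/
inductive PTree where
  | node : List PTree → PTree

/-- Poisson pmf with parameter `μ`. -/
noncomputable def poissonPMF (μ : ℝ) (k : ℕ) : ℝ :=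
  Real.exp (-μ) * μ ^ k / (Nat.factorial k)

/-- pmf of the Galton-Watson tree with Poisson(μ) offspring, pruned at depth `d`. -/
noncomputable def gw (μ : ℝ) : ℕ → PTree → ℝ := fun d =>
  Nat.rec
    (fun t => match t with | .node l => if l.isEmpty then 1 else 0)
    (fun _ ih t => match t with | .node l => poissonPMF μ l.length * (l.map ih).prod)
    d

/-- Shannon entropy of a pmf on trees. -/
noncomputable def ent (P : PTree → ℝ) : ℝ := -∑' t : PTree, P t * Real.log (P t)

/-!
Cutting a tree at its root, `GW_{μ,d+1}` is the law of a Poisson(μ) number `N` of independent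
`GW_{μ,d}` subtrees. Since `negMulLog (x * y) = y * negMulLog x + x * negMulLog y`, entropy is
additive over independent coordinates, so this compound law has entropy
`Ent(π_μ) + E[N] · Ent(GW_{μ,d}) = Ent(π_μ) + μ · Ent(GW_{μ,d})`. Hence
`Ent(GW_{μ,d}) = Ent(π_μ) · (1 + μ + ⋯ + μ^{d-1})`, which gives the recursion and, for `μ < 1`,
the geometric bound. Probabilities are at most `1`, so every series involved has nonnegative terms
and may be rearranged freely; `Ent(π_μ)` is finite because `log k! ≤ k²` and the Poisson law has
a finite second moment.
-/

open Real Finset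
open scoped Nat

section IndependentProduct

variable {α β : Type*}

lemma le_one_of_hasSum_one {P : α → ℝ} (hP0 : 0 ≤ P) (hP : HasSum P 1) (a : α) : P a ≤ 1 :=
  le_hasSum hP a fun b _ => hP0 b

lemma negMulLog_nonneg_of_hasSum_one {P : α → ℝ} (hP0 : 0 ≤ P) (hP : HasSum P 1) (a : α) :
    0 ≤ negMulLog (P a) :=
  negMulLog_nonneg (hP0 a) (le_one_of_hasSum_one hP0 hP a)

lemma HasSum.mul_of_nonneg {f : α → ℝ} {g : β → ℝ} {s t : ℝ} (hf : HasSum f s)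
    (hg : HasSum g t) (hf0 : 0 ≤ f) (hg0 : 0 ≤ g) : HasSum (fun z : α × β => f z.1 * g z.2) (s * t) :=
  hf.mul hg (hf.summable.mul_of_nonneg hg.summable hf0 hg0)

lemma hasSum_negMulLog_mul {P : α → ℝ} {R : β → ℝ} {h₁ h₂ : ℝ}
    (hP0 : 0 ≤ P) (hP : HasSum P 1) (hR0 : 0 ≤ R) (hR : HasSum R 1)
    (hPH : HasSum (fun a => negMulLog (P a)) h₁) (hRH : HasSum (fun b => negMulLog (R b)) h₂) :
    HasSum (fun z : α × β => negMulLog (P z.1 * R z.2)) (h₁ + h₂) := by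
  have := (hPH.mul_of_nonneg hR (negMulLog_nonneg_of_hasSum_one hP0 hP) hR0).add
    (hP.mul_of_nonneg hRH hP0 (negMulLog_nonneg_of_hasSum_one hR0 hR))
  convert this using 1
  · funext z
    rw [negMulLog_mul]
    ring
  · ring

lemma hasSum_prod_fin {P : α → ℝ} (hP0 : 0 ≤ P) (hP : HasSum P 1) :
    ∀ n : ℕ, HasSum (fun v : Fin n → α => ∏ i, P (v i)) 1
  | 0 => by simp
  | n + 1 => by
    rw [← (Fin.consEquiv fun _ => α).hasSum_iff]
    simpa [Function.comp_def, Fin.prod_univ_succ] using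
      hP.mul_of_nonneg (hasSum_prod_fin hP0 hP n) hP0 fun v => prod_nonneg fun i _ => hP0 (v i)

lemma hasSum_negMulLog_prod_fin {P : α → ℝ} {h : ℝ} (hP0 : 0 ≤ P) (hP : HasSum P 1)
    (hPH : HasSum (fun a => negMulLog (P a)) h) :
    ∀ n : ℕ, HasSum (fun v : Fin n → α => negMulLog (∏ i, P (v i))) (n * h)
  | 0 => by simp
  | n + 1 => by
    rw [← (Fin.consEquiv fun _ => α).hasSum_iff]
    have := hasSum_negMulLog_mul hP0 hP (fun v => prod_nonneg fun i _ => hP0 (v i))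
      (hasSum_prod_fin hP0 hP n) hPH (hasSum_negMulLog_prod_fin hP0 hP hPH n)
    convert this using 1
    · simp [Function.comp_def, Fin.prod_univ_succ]
    · push_cast
      ring

end IndependentProduct

section Compound

variable {α : Type*} {p : ℕ → ℝ} {Q : α → ℝ}

lemma hasSum_sigma_of_nonneg {ι : Type*} {γ : ι → Type*} {f : (Σ i, γ i) → ℝ} {g : ι → ℝ}
    {s : ℝ} (hf : 0 ≤ f) (hfib : ∀ i, HasSum (fun c => f ⟨i, c⟩) (g i)) (hg : HasSum g s) :
    HasSum f s := by
  have hsum : Summable f := (summable_sigma_of_nonneg hf).2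
    ⟨fun i => (hfib i).summable, by simpa only [(hfib _).tsum_eq] using hg.summable⟩
  exact hg.unique (hsum.hasSum.sigma hfib) ▸ hsum.hasSum

lemma hasSum_compound (hp0 : 0 ≤ p) (hp : HasSum p 1) (hQ0 : 0 ≤ Q) (hQ : HasSum Q 1) :
    HasSum (fun x : Σ n, Fin n → α => p x.1 * ∏ i, Q (x.2 i)) 1 :=
  hasSum_sigma_of_nonneg (fun x => mul_nonneg (hp0 _) (prod_nonneg fun i _ => hQ0 _))
    (fun n => by simpa using (hasSum_prod_fin hQ0 hQ n).mul_left (p n)) hp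

lemma hasSum_negMulLog_compound {Hp m Hq : ℝ} (hp0 : 0 ≤ p) (hp : HasSum p 1)
    (hQ0 : 0 ≤ Q) (hQ : HasSum Q 1) (hpH : HasSum (fun n => negMulLog (p n)) Hp)
    (hpMean : HasSum (fun n => p n * n) m) (hQH : HasSum (fun a => negMulLog (Q a)) Hq) :
    HasSum (fun x : Σ n, Fin n → α => negMulLog (p x.1 * ∏ i, Q (x.2 i))) (Hp + m * Hq) := by
  refine hasSum_sigma_of_nonneg
    (negMulLog_nonneg_of_hasSum_one (fun x => mul_nonneg (hp0 _) (prod_nonneg fun i _ => hQ0 _))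
      (hasSum_compound hp0 hp hQ0 hQ))
    (fun n => ?_) (hpH.add (hpMean.mul_right Hq))
  have := ((hasSum_prod_fin hQ0 hQ n).mul_right (negMulLog (p n))).add
    ((hasSum_negMulLog_prod_fin hQ0 hQ hQH n).mul_left (p n))
  rw [one_mul, ← mul_assoc] at this
  simpa only [negMulLog_mul] using this

end Compound

section Poisson

variable {μ : ℝ}

lemma poissonPMF_nonneg (hμ : 0 ≤ μ) : 0 ≤ poissonPMF μ := fun k => by
  unfold poissonPMF
  positivity

lemma hasSum_poissonPMF (μ : ℝ) : HasSum (poissonPMF μ) 1 := by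
  have := (NormedSpace.expSeries_div_hasSum_exp μ).mul_left (exp (-μ))
  rw [← exp_eq_exp_ℝ, ← exp_add, neg_add_cancel, exp_zero] at this
  simp only [← mul_div_assoc] at this
  exact this

lemma poissonPMF_succ_mul (μ : ℝ) (k : ℕ) :
    poissonPMF μ (k + 1) * (k + 1) = μ * poissonPMF μ k := by
  simp only [poissonPMF, Nat.factorial_succ, Nat.cast_mul]
  field_simp
  push_cast
  ring

lemma hasSum_poissonPMF_mul_nat (μ : ℝ) : HasSum (fun k => poissonPMF μ k * k) μ := by
  rw [← hasSum_nat_add_iff' 1]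
  simpa [poissonPMF_succ_mul] using (hasSum_poissonPMF μ).mul_left μ

lemma summable_poissonPMF_mul_sq (μ : ℝ) : Summable fun k => poissonPMF μ k * k ^ 2 := by
  rw [← summable_nat_add_iff 1]
  refine (((hasSum_poissonPMF_mul_nat μ).summable.add (hasSum_poissonPMF μ).summable).mul_left
    μ).congr fun k => ?_
  push_cast
  rw [sq, ← mul_assoc, poissonPMF_succ_mul]
  ring

lemma log_factorial_le_sq (k : ℕ) : log k ! ≤ k ^ 2 :=
  calc log k ! ≤ log ((k : ℝ) ^ k) := by
        gcongr
        exact_mod_cast Nat.factorial_le_pow k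
    _ ≤ k ^ 2 := by
        rw [log_pow, sq]
        gcongr
        exact log_le_self (Nat.cast_nonneg k)

lemma negMulLog_poissonPMF (hμ : 0 < μ) (k : ℕ) : negMulLog (poissonPMF μ k) =
    μ * poissonPMF μ k - log μ * (poissonPMF μ k * k) + poissonPMF μ k * log k ! := by
  rw [negMulLog, poissonPMF, log_div (by positivity) (by positivity),
    log_mul (by positivity) (by positivity), log_exp, log_pow]
  ring

lemma summable_negMulLog_poissonPMF (hμ : 0 < μ) :
    Summable fun k => negMulLog (poissonPMF μ k) := by
  have hlog : Summable fun k => poissonPMF μ k * log k ! :=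
    (summable_poissonPMF_mul_sq μ).of_nonneg_of_le
      (fun k => mul_nonneg (poissonPMF_nonneg hμ.le k) (log_nonneg (mod_cast k.factorial_pos)))
      (fun k => mul_le_mul_of_nonneg_left (log_factorial_le_sq k) (poissonPMF_nonneg hμ.le k))
  refine ((((hasSum_poissonPMF μ).summable.mul_left μ).sub
    ((hasSum_poissonPMF_mul_nat μ).summable.mul_left (log μ))).add hlog).congr fun k => ?_
  exact (negMulLog_poissonPMF hμ k).symm

noncomputable def poissonEntropy (μ : ℝ) : ℝ := ∑' k, negMulLog (poissonPMF μ k)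

lemma poissonEntropy_nonneg (hμ : 0 ≤ μ) : 0 ≤ poissonEntropy μ :=
  tsum_nonneg (negMulLog_nonneg_of_hasSum_one (poissonPMF_nonneg hμ) (hasSum_poissonPMF μ))

end Poisson

section GaltonWatson

variable {μ : ℝ}

def PTree.equivSigmaTuple : PTree ≃ Σ n, Fin n → PTree :=
  (⟨fun | .node l => l, .node, fun | .node _ => rfl, fun _ => rfl⟩ : PTree ≃ List PTree).trans
    List.equivSigmaTuple

lemma gw_zero_apply (μ : ℝ) (t : PTree) [Decidable (t = .node [])] :
    gw μ 0 t = if t = .node [] then 1 else 0 := by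
  obtain ⟨_ | _⟩ := t <;> simp [gw]

lemma gw_succ_equivSigmaTuple_symm (μ : ℝ) (d : ℕ) (x : Σ n, Fin n → PTree) :
    gw μ (d + 1) (PTree.equivSigmaTuple.symm x) = poissonPMF μ x.1 * ∏ i, gw μ d (x.2 i) := by
  obtain ⟨n, v⟩ := x
  show poissonPMF μ (List.ofFn v).length * ((List.ofFn v).map (gw μ d)).prod = _
  rw [List.length_ofFn, List.map_ofFn, List.prod_ofFn]
  rfl

lemma gw_nonneg (hμ : 0 ≤ μ) : ∀ d, 0 ≤ gw μ d
  | 0 => fun t => by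
    classical
    rw [gw_zero_apply]
    split_ifs <;> norm_num
  | d + 1 => fun t => by
    rw [← PTree.equivSigmaTuple.symm_apply_apply t, gw_succ_equivSigmaTuple_symm]
    exact mul_nonneg (poissonPMF_nonneg hμ _) (prod_nonneg fun i _ => gw_nonneg hμ d _)

lemma hasSum_gw (hμ : 0 ≤ μ) : ∀ d, HasSum (gw μ d) 1
  | 0 => by
    classical
    convert hasSum_ite_eq (PTree.node []) (1 : ℝ) with t
    exact gw_zero_apply μ t
  | d + 1 => by
    rw [← PTree.equivSigmaTuple.symm.hasSum_iff]
    simpa only [Function.comp_def, gw_succ_equivSigmaTuple_symm] using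
      hasSum_compound (poissonPMF_nonneg hμ) (hasSum_poissonPMF μ) (gw_nonneg hμ d)
        (hasSum_gw hμ d)

lemma hasSum_negMulLog_gw (hμ : 0 < μ) : ∀ d,
    HasSum (fun t => negMulLog (gw μ d t)) (poissonEntropy μ * ∑ i ∈ range d, μ ^ i)
  | 0 => by
    classical
    simp only [gw_zero_apply, range_zero, sum_empty, mul_zero]
    convert hasSum_zero with t
    split_ifs <;> simp
  | d + 1 => by
    rw [← PTree.equivSigmaTuple.symm.hasSum_iff]
    convert hasSum_negMulLog_compound (poissonPMF_nonneg hμ.le) (hasSum_poissonPMF μ)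
      (gw_nonneg hμ.le d) (hasSum_gw hμ.le d)
      (summable_negMulLog_poissonPMF hμ).hasSum (hasSum_poissonPMF_mul_nat μ)
      (hasSum_negMulLog_gw hμ d) using 1
    · simp only [Function.comp_def, gw_succ_equivSigmaTuple_symm]
    · rw [geom_sum_succ, poissonEntropy]
      ring

end GaltonWatson

lemma neg_tsum_mul_log {ι : Type*} (f : ι → ℝ) :
    -∑' i, f i * log (f i) = ∑' i, negMulLog (f i) := by
  simp only [negMulLog, neg_mul, tsum_neg]

/-- Entropy recursion `Ent(GW_{μ,d+1}) = Ent(GW_{μ,d}) + μ^d Ent(π_μ)`, and consequently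
`Ent(GW_{μ,d}) ≤ Ent(π_μ)/(1-μ)` for all `d` when `μ < 1`. -/
theorem stmt_5 (μ : ℝ) (hμ : 0 < μ) :
    (∀ d : ℕ, ent (gw μ (d + 1)) =
      ent (gw μ d) + μ ^ d * (-∑' k : ℕ, poissonPMF μ k * Real.log (poissonPMF μ k))) ∧
    (μ < 1 → ∀ d : ℕ,
      ent (gw μ d) ≤ (-∑' k : ℕ, poissonPMF μ k * Real.log (poissonPMF μ k)) / (1 - μ)) := by
  have hent (d : ℕ) : ent (gw μ d) = poissonEntropy μ * ∑ i ∈ range d, μ ^ i := by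
    rw [ent, neg_tsum_mul_log, (hasSum_negMulLog_gw hμ d).tsum_eq]
  rw [neg_tsum_mul_log, ← poissonEntropy]
  refine ⟨fun d => by rw [hent, hent, geom_sum_succ']; ring, fun hμ1 d => ?_⟩
  calc ent (gw μ d) ≤ poissonEntropy μ * (μ ^ 0 / (1 - μ)) := by
        rw [hent, range_eq_Ico]
        exact mul_le_mul_of_nonneg_left (geom_sum_Ico_le_of_lt_one hμ.le hμ1)
          (poissonEntropy_nonneg hμ.le)
    _ = poissonEntropy μ / (1 - μ) := by ring
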